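/- For any rank-2 matrix of the form u₁v₁ᵀ + u₂v₂ᵀ with u₁ ⟂ u₂, the nuclear norm lies between √(‖u₁‖²‖v₁‖² + ‖u₂‖²‖v₂‖²) and ‖u₁‖‖v₁‖ + ‖u₂‖‖v₂‖. -/

import Mathlib

open Matrix BigOperators

/-- Euclidean 2-norm of a vector in `ℝ^n`. -/
noncomputable def enorm₂ {n : ℕ} (x : Fin n → ℝ) : ℝ := Real.sqrt (∑ i, x i ^ 2)

/-- Frobenius norm of a real matrix. -/
noncomputable def frobNorm {m n : ℕ} (M : Matrix (Fin m) (Fin n) ℝ) : ℝ :=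
  Real.sqrt (∑ i, ∑ j, M i j ^ 2)

/-- The singular values of a real `m × n` matrix: square roots of the eigenvalues of `Aᵀ A`
(for real matrices `Aᴴ = Aᵀ`). -/
noncomputable def singVal {m n : ℕ} (A : Matrix (Fin m) (Fin n) ℝ) (i : Fin n) : ℝ :=
  Real.sqrt ((show (Aᵀ * A).IsHermitian by
    simpa using Matrix.isHermitian_conjTranspose_mul_self A).eigenvalues i)

/-- Nuclear (trace) norm: the sum of the singular values with multiplicity. -/
noncomputable def nuclearNorm {m n : ℕ} (A : Matrix (Fin m) (Fin n) ℝ) : ℝ :=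
  ∑ i, singVal A i

/-- Spectral norm (operator 2-norm): sup of `‖A x‖₂` over Euclidean unit vectors `x`. -/
noncomputable def specNorm {m n : ℕ} (A : Matrix (Fin m) (Fin n) ℝ) : ℝ :=
  sSup {c | ∃ x : Fin n → ℝ, enorm₂ x = 1 ∧ c = enorm₂ (A.mulVec x)}

/-- Smallest singular value of a real `m × n` matrix. -/
noncomputable def sigmaMin {m n : ℕ} (A : Matrix (Fin m) (Fin n) ℝ) : ℝ :=
  Real.sqrt (⨅ i : Fin n, (show (Aᵀ * A).IsHermitian by
    simpa using Matrix.isHermitian_conjTranspose_mul_self A).eigenvalues i)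

/-!
The singular values of `A = u₁v₁ᵀ + u₂v₂ᵀ` are the square roots of the eigenvalues `λₖ` of
`AᵀA = ‖u₁‖² v₁v₁ᵀ + ‖u₂‖² v₂v₂ᵀ` (this is where `u₁ ⟂ u₂` enters). Taking traces of `AᵀA` and
`(AᵀA)²` gives `∑ λₖ = ‖u₁‖²‖v₁‖² + ‖u₂‖²‖v₂‖²` and
`(∑ λₖ)² - ∑ λₖ² = 2‖u₁‖²‖u₂‖²(‖v₁‖²‖v₂‖² - ⟨v₁, v₂⟩²)`.
The lower bound is then `√(∑ λₖ) ≤ ∑ √λₖ`. For the upper bound, `A` has rank at most two, so at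
most two eigenvalues `λ, μ` are nonzero, `λμ ≤ (‖u₁‖‖v₁‖‖u₂‖‖v₂‖)²` by the identity above, and
`(√λ + √μ)² = λ + μ + 2√(λμ) ≤ (‖u₁‖‖v₁‖ + ‖u₂‖‖v₂‖)²`.
-/

open Finset

theorem Real.sqrt_sum_le_sum_sqrt {ι : Type*} (s : Finset ι) {f : ι → ℝ} (hf : ∀ i ∈ s, 0 ≤ f i) :
    √(∑ i ∈ s, f i) ≤ ∑ i ∈ s, √(f i) := by
  rw [Real.sqrt_le_iff]
  refine ⟨sum_nonneg fun i _ ↦ Real.sqrt_nonneg _, ?_⟩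
  calc ∑ i ∈ s, f i = ∑ i ∈ s, √(f i) ^ 2 := sum_congr rfl fun i hi ↦ (Real.sq_sqrt (hf i hi)).symm
    _ ≤ (∑ i ∈ s, √(f i)) ^ 2 := sum_sq_le_sq_sum_of_nonneg fun i _ ↦ Real.sqrt_nonneg _

theorem Real.sq_sum_sqrt_eq_of_card_le_two {ι : Type*} [DecidableEq ι] {s : Finset ι} (hs : #s ≤ 2)
    {f : ι → ℝ} (hf : ∀ i ∈ s, 0 ≤ f i) :
    (∑ i ∈ s, √(f i)) ^ 2 = ∑ i ∈ s, f i + √(2 * ((∑ i ∈ s, f i) ^ 2 - ∑ i ∈ s, f i ^ 2)) := by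
  interval_cases h : #s
  · simp [card_eq_zero.mp h]
  · obtain ⟨a, rfl⟩ := card_eq_one.mp h
    simp [Real.sq_sqrt (hf a (mem_singleton_self a))]
  · obtain ⟨a, b, hab, rfl⟩ := card_eq_two.mp h
    have ha := hf a (by simp)
    have hb := hf b (by simp)
    have h4 : 2 * ((f a + f b) ^ 2 - (f a ^ 2 + f b ^ 2)) = 2 ^ 2 * (f a * f b) := by ring
    rw [sum_pair hab, sum_pair hab, sum_pair hab, h4, Real.sqrt_mul (by norm_num),
      Real.sqrt_sq (by norm_num), Real.sqrt_mul ha, add_sq, Real.sq_sqrt ha, Real.sq_sqrt hb]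
    ring

theorem Real.sum_sqrt_le_add_of_card_support_le_two {ι : Type*} [Fintype ι] [DecidableEq ι]
    {f : ι → ℝ} (hf : ∀ i, 0 ≤ f i) (hcard : #{i | f i ≠ 0} ≤ 2) {s t : ℝ} (hs : 0 ≤ s)
    (ht : 0 ≤ t) (hsum : ∑ i, f i = s ^ 2 + t ^ 2)
    (hsq : (∑ i, f i) ^ 2 - ∑ i, f i ^ 2 ≤ 2 * (s * t) ^ 2) :
    ∑ i, √(f i) ≤ s + t := by
  have hsupp {g : ℝ → ℝ} (hg : g 0 = 0) : ∑ i with f i ≠ 0, g (f i) = ∑ i, g (f i) :=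
    sum_filter_of_ne fun i _ hi h0 ↦ hi (by rw [h0, hg])
  rw [← pow_le_pow_iff_left₀ (sum_nonneg fun i _ ↦ Real.sqrt_nonneg _) (by positivity) two_ne_zero]
  have key := Real.sq_sum_sqrt_eq_of_card_le_two hcard fun i _ ↦ hf i
  rw [hsupp (g := (√·)) Real.sqrt_zero, sum_filter_ne_zero,
    hsupp (g := (· ^ 2)) (zero_pow two_ne_zero)] at key
  calc (∑ i, √(f i)) ^ 2 = ∑ i, f i + √(2 * ((∑ i, f i) ^ 2 - ∑ i, f i ^ 2)) := key
    _ ≤ s ^ 2 + t ^ 2 + √((2 * (s * t)) ^ 2) := by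
        rw [hsum]; gcongr; nlinarith
    _ = (s + t) ^ 2 := by rw [Real.sqrt_sq (by positivity)]; ring

namespace Matrix

theorem IsHermitian.trace_mul_self_eq_sum_sq_eigenvalues {𝕜 n : Type*} [RCLike 𝕜] [Fintype n]
    [DecidableEq n] {A : Matrix n n 𝕜} (hA : A.IsHermitian) :
    (A * A).trace = ∑ i, ((hA.eigenvalues i ^ 2 : ℝ) : 𝕜) := by
  set U : Matrix n n 𝕜 := (hA.eigenvectorUnitary : Matrix n n 𝕜)
  have hspec : A * A = U * diagonal (fun i ↦ ((hA.eigenvalues i ^ 2 : ℝ) : 𝕜)) * star U := by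
    conv_lhs => rw [hA.spectral_theorem, ← map_mul, diagonal_mul_diagonal]
    simp [U, pow_two]
  rw [hspec, trace_mul_comm, ← mul_assoc, Unitary.coe_star_mul_self, one_mul, trace_diagonal]

theorem rank_add_le {K m n : Type*} [Field K] [Fintype n] (A B : Matrix m n K) :
    (A + B).rank ≤ A.rank + B.rank := by
  rw [rank, rank, rank, mulVecLin_add]
  have h : LinearMap.range (A.mulVecLin + B.mulVecLin) ≤
      LinearMap.range A.mulVecLin ⊔ LinearMap.range B.mulVecLin := by
    rintro x ⟨y, rfl⟩
    exact Submodule.mem_sup.2 ⟨A.mulVecLin y, ⟨y, rfl⟩, B.mulVecLin y, ⟨y, rfl⟩, rfl⟩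
  exact (Submodule.finrank_mono h).trans (Submodule.finrank_add_le_finrank_add_finrank _ _)

theorem rank_vecMulVec_add_vecMulVec_le {K m n : Type*} [Field K] [Fintype n]
    (u₁ u₂ : m → K) (v₁ v₂ : n → K) : (vecMulVec u₁ v₁ + vecMulVec u₂ v₂).rank ≤ 2 :=
  (rank_add_le _ _).trans (add_le_add (rank_vecMulVec_le _ _) (rank_vecMulVec_le _ _))

theorem transpose_mul_self_vecMulVec_add_vecMulVec {R l m : Type*} [CommSemiring R] [Fintype l]
    (u₁ u₂ : l → R) (v₁ v₂ : m → R) (h : u₁ ⬝ᵥ u₂ = 0) :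
    (vecMulVec u₁ v₁ + vecMulVec u₂ v₂)ᵀ * (vecMulVec u₁ v₁ + vecMulVec u₂ v₂) =
      (u₁ ⬝ᵥ u₁) • vecMulVec v₁ v₁ + (u₂ ⬝ᵥ u₂) • vecMulVec v₂ v₂ := by
  have h' : u₂ ⬝ᵥ u₁ = 0 := by rw [dotProduct_comm, h]
  rw [transpose_add, transpose_vecMulVec, transpose_vecMulVec]
  simp only [Matrix.add_mul, Matrix.mul_add, vecMulVec_mul_vecMulVec, h, h', zero_smul,
    vecMulVec_smul, vecMulVec_zero, add_zero, zero_add]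

theorem trace_smul_vecMulVec_add_smul_vecMulVec {R m : Type*} [CommSemiring R] [Fintype m]
    (a b : R) (x y : m → R) :
    (a • vecMulVec x x + b • vecMulVec y y).trace = a * (x ⬝ᵥ x) + b * (y ⬝ᵥ y) := by
  simp only [trace_add, trace_smul, trace_vecMulVec, smul_eq_mul]

theorem trace_mul_self_smul_vecMulVec_add_smul_vecMulVec {R m : Type*} [CommSemiring R]
    [Fintype m] (a b : R) (x y : m → R) :
    ((a • vecMulVec x x + b • vecMulVec y y) * (a • vecMulVec x x + b • vecMulVec y y)).trace =
      a ^ 2 * (x ⬝ᵥ x) ^ 2 + b ^ 2 * (y ⬝ᵥ y) ^ 2 + 2 * a * b * (x ⬝ᵥ y) ^ 2 := by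
  simp only [Matrix.add_mul, Matrix.mul_add, Matrix.smul_mul, Matrix.mul_smul,
    vecMulVec_mul_vecMulVec, trace_add, trace_smul, trace_vecMulVec, dotProduct_smul,
    smul_eq_mul, dotProduct_comm y x]
  ring

theorem IsHermitian.sum_eigenvalues_of_eq_smul_vecMulVec_add {n : Type*} [Fintype n]
    [DecidableEq n] {M : Matrix n n ℝ} (hM : M.IsHermitian) {a b : ℝ} {x y : n → ℝ}
    (h : M = a • vecMulVec x x + b • vecMulVec y y) :
    ∑ i, hM.eigenvalues i = a * (x ⬝ᵥ x) + b * (y ⬝ᵥ y) := by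
  rw [← trace_smul_vecMulVec_add_smul_vecMulVec, ← h]
  simpa using hM.trace_eq_sum_eigenvalues.symm

theorem IsHermitian.sum_sq_eigenvalues_of_eq_smul_vecMulVec_add {n : Type*} [Fintype n]
    [DecidableEq n] {M : Matrix n n ℝ} (hM : M.IsHermitian) {a b : ℝ} {x y : n → ℝ}
    (h : M = a • vecMulVec x x + b • vecMulVec y y) :
    ∑ i, hM.eigenvalues i ^ 2 =
      a ^ 2 * (x ⬝ᵥ x) ^ 2 + b ^ 2 * (y ⬝ᵥ y) ^ 2 + 2 * a * b * (x ⬝ᵥ y) ^ 2 := by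
  rw [← trace_mul_self_smul_vecMulVec_add_smul_vecMulVec, ← h]
  simpa using hM.trace_mul_self_eq_sum_sq_eigenvalues.symm

end Matrix

theorem enorm₂_sq {n : ℕ} (x : Fin n → ℝ) : enorm₂ x ^ 2 = x ⬝ᵥ x := by
  rw [enorm₂, Real.sq_sqrt (sum_nonneg fun i _ ↦ sq_nonneg _)]
  simp only [dotProduct, pow_two]

theorem enorm₂_nonneg {n : ℕ} (x : Fin n → ℝ) : 0 ≤ enorm₂ x := Real.sqrt_nonneg _

theorem nuclearNorm_eq_sum_sqrt_eigenvalues {m n : ℕ} (A : Matrix (Fin m) (Fin n) ℝ)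
    (hA : (Aᵀ * A).IsHermitian) : nuclearNorm A = ∑ i, √(hA.eigenvalues i) := rfl

/-- For `u₁ ⟂ u₂`, the nuclear norm of `u₁v₁ᵀ + u₂v₂ᵀ` lies between
`√(‖u₁‖²‖v₁‖² + ‖u₂‖²‖v₂‖²)` and `‖u₁‖‖v₁‖ + ‖u₂‖‖v₂‖`. -/
theorem nuclearNorm_rank_two_bounds {m n : ℕ} (u₁ u₂ : Fin m → ℝ) (v₁ v₂ : Fin n → ℝ)
    (horth : (∑ i, u₁ i * u₂ i) = 0) :
    Real.sqrt (enorm₂ u₁ ^ 2 * enorm₂ v₁ ^ 2 + enorm₂ u₂ ^ 2 * enorm₂ v₂ ^ 2)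
        ≤ nuclearNorm (vecMulVec u₁ v₁ + vecMulVec u₂ v₂) ∧
    nuclearNorm (vecMulVec u₁ v₁ + vecMulVec u₂ v₂)
        ≤ enorm₂ u₁ * enorm₂ v₁ + enorm₂ u₂ * enorm₂ v₂ := by
  set A := vecMulVec u₁ v₁ + vecMulVec u₂ v₂
  have hG : (Aᵀ * A).IsHermitian := isHermitian_conjTranspose_mul_self A
  have hgram := transpose_mul_self_vecMulVec_add_vecMulVec u₁ u₂ v₁ v₂ horth
  have hnonneg : ∀ k, 0 ≤ hG.eigenvalues k := eigenvalues_conjTranspose_mul_self_nonneg A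
  have hcard : #{k | hG.eigenvalues k ≠ 0} ≤ 2 := by
    rw [← Fintype.card_subtype, ← hG.rank_eq_card_non_zero_eigs, rank_transpose_mul_self]
    exact rank_vecMulVec_add_vecMulVec_le u₁ u₂ v₁ v₂
  have hsum := hG.sum_eigenvalues_of_eq_smul_vecMulVec_add hgram
  have hsq := hG.sum_sq_eigenvalues_of_eq_smul_vecMulVec_add hgram
  simp only [← enorm₂_sq] at hsum hsq
  have hprod : (∑ k, hG.eigenvalues k) ^ 2 - ∑ k, hG.eigenvalues k ^ 2 ≤
      2 * (enorm₂ u₁ * enorm₂ v₁ * (enorm₂ u₂ * enorm₂ v₂)) ^ 2 := by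
    rw [hsum, hsq]
    nlinarith [sq_nonneg (v₁ ⬝ᵥ v₂), sq_nonneg (enorm₂ u₁ * enorm₂ u₂)]
  rw [nuclearNorm_eq_sum_sqrt_eigenvalues A hG]
  exact ⟨hsum ▸ Real.sqrt_sum_le_sum_sqrt _ fun k _ ↦ hnonneg k,
    Real.sum_sqrt_le_add_of_card_support_le_two hnonneg hcard
      (mul_nonneg (enorm₂_nonneg u₁) (enorm₂_nonneg v₁))
      (mul_nonneg (enorm₂_nonneg u₂) (enorm₂_nonneg v₂)) (by rw [hsum]; ring) hprod⟩
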